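/- Let G be a group of order n², U a subgroup of order n, and P a regular (n,r) Latin square type PDS in G with P ∩ U = ∅. Then |P ∩ Ug| = r for every coset Ug ≠ U of U in G. -/

import Mathlib

open Finset BigOperators Pointwise

variable {G : Type*}

/-- Number of ordered pairs `(x,y)` with `x,y ∈ D`, `x ≠ y`, `x * y⁻¹ = g`. -/
noncomputable def diffCount [Group G] (D : Set G) (g : G) : ℕ :=
  Nat.card {p : G × G // p.1 ∈ D ∧ p.2 ∈ D ∧ p.1 ≠ p.2 ∧ p.1 * p.2⁻¹ = g}

/-- `D` is a `(v,k,λ,μ)` partial difference set in `G`. -/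
def IsPDS [Group G] (D : Set G) (v k : ℕ) (l m : ℤ) : Prop :=
  Nat.card G = v ∧ Nat.card D = k ∧
    ∀ g : G, g ≠ 1 →
      (g ∈ D → (diffCount D g : ℤ) = l) ∧ (g ∉ D → (diffCount D g : ℤ) = m)

/-- A regular PDS: a PDS avoiding the identity and closed under inversion. -/
def IsRegularPDS [Group G] (D : Set G) (v k : ℕ) (l m : ℤ) : Prop :=
  IsPDS D v k l m ∧ (1 : G) ∉ D ∧ D⁻¹ = D

/-- A regular `(n,r)` Latin square type PDS. -/
def IsLatinPDS [Group G] (D : Set G) (n r : ℕ) : Prop :=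
  IsRegularPDS D (n ^ 2) (r * (n - 1)) ((n : ℤ) + (r : ℤ) ^ 2 - 3 * r) ((r : ℤ) ^ 2 - r)

/-- A regular `(n,r)` negative Latin square type PDS. -/
def IsNegLatinPDS [Group G] (D : Set G) (n r : ℕ) : Prop :=
  IsRegularPDS D (n ^ 2) (r * (n + 1)) (-(n : ℤ) + (r : ℤ) ^ 2 + 3 * r) ((r : ℤ) ^ 2 + r)

/-- Character sum `χ(D) = ∑_{d ∈ D} χ(d)`. -/
noncomputable def charSum [Group G] (χ : G →* ℂˣ) (D : Set G) : ℂ :=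
  ∑ᶠ d ∈ D, (χ d : ℂ)

/-- The multiset of character sums `{χ(P 0), …, χ(P (t-1))}`. -/
noncomputable def charMultiset [Group G] {t : ℕ} (χ : G →* ℂˣ) (P : Fin t → Set G) :
    Multiset ℂ :=
  (Finset.univ.val : Multiset (Fin t)).map fun i => charSum χ (P i)

/-- `χ` is principal on the subgroup `U`. -/
def IsPrincipalOn [Group G] (χ : G →* ℂˣ) (U : Subgroup G) : Prop :=
  ∀ u ∈ U, χ u = 1

/-- A `(c,t)` LP-packing in `G` relative to `U`. -/
def IsLPPacking [CommGroup G] (c t : ℕ) (P : Fin t → Set G) (U : Subgroup G) : Prop :=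
  Nat.card G = t ^ 2 * c ^ 2 ∧ Nat.card U = t * c ∧
    (∀ i, IsLatinPDS (P i) (t * c) c) ∧
    (∀ i j, i ≠ j → Disjoint (P i) (P j)) ∧
    (⋃ i, P i) = Set.univ \ (U : Set G)

/-- A `(c,t-1)` NLP-packing in `G`. -/
def IsNLPPacking [CommGroup G] (c t : ℕ) (P : Fin (t - 1) → Set G) : Prop :=
  Nat.card G = t ^ 2 * c ^ 2 ∧
    (∀ i, IsNegLatinPDS (P i) (t * c) c) ∧
    IsNegLatinPDS (Set.univ \ ({1} ∪ ⋃ i, P i)) (t * c) (c - 1)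

/-- A `(c,t)` LP-partition in `G − V` relative to `H`. -/
def IsLPPartition [CommGroup G] (c t : ℕ) (R : Fin t → Set G) (V H : Subgroup G) : Prop :=
  Nat.card G = t ^ 2 * c ^ 2 ∧ Nat.card V = t * c ^ 2 ∧ H ≤ V ∧
    (∀ i, Nat.card (R i) = (t - 1) * c ^ 2) ∧
    (∀ i j, i ≠ j → Disjoint (R i) (R j)) ∧
    (⋃ i, R i) = Set.univ \ (V : Set G) ∧
    ∀ χ : G →* ℂˣ, χ ≠ 1 →
      (IsPrincipalOn χ V → charMultiset χ R = Multiset.replicate t (-(c : ℂ) ^ 2)) ∧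
      (¬ IsPrincipalOn χ V → IsPrincipalOn χ H →
        charMultiset χ R = Multiset.replicate t 0) ∧
      (¬ IsPrincipalOn χ H →
        charMultiset χ R = ((t : ℂ) - 1) * (c : ℂ) ::ₘ Multiset.replicate (t - 1) (-(c : ℂ)))

/-! Let `a_q = |P ∩ q|` for the right cosets `q` of `U`. Counting the pairs `(x, y) ∈ P²` with
`x y⁻¹ ∈ U` by cosets gives `∑ a_q²`; counting them by the value of `x y⁻¹` gives
`|P| + (n - 1)(r² - r)`, since every nonidentity element of `U` lies outside `P`. As `a_U = 0`,
the remaining `n - 1` cosets satisfy `∑ a_q = (n - 1) r` and `∑ a_q² = (n - 1) r²`, so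
`∑ (a_q - r)² = 0`: this is the equality case of Cauchy–Schwarz. -/

section RightCosets

variable [Group G] (U : Subgroup G)

lemma rightRel_mk_eq_mk_iff {x y : G} :
    (⟦x⟧ : Quotient (QuotientGroup.rightRel U)) = ⟦y⟧ ↔ x * y⁻¹ ∈ U := by
  rw [Quotient.eq, QuotientGroup.rightRel_apply, ← U.inv_mem_iff, mul_inv_rev, inv_inv]

lemma mem_subgroup_mul_singleton_iff {x g : G} : x ∈ (U : Set G) * {g} ↔ x * g⁻¹ ∈ U := by
  simp [Set.mul_singleton]

lemma subgroup_mul_singleton_eq_self {g : G} (hg : g ∈ U) : (U : Set G) * {g} = U := by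
  ext x
  rw [mem_subgroup_mul_singleton_iff, SetLike.mem_coe, U.mul_mem_cancel_right (U.inv_mem hg)]

lemma card_quotient_rightRel_eq_index :
    Nat.card (Quotient (QuotientGroup.rightRel U)) = U.index :=
  Nat.card_congr (QuotientGroup.quotientRightRelEquivQuotientLeftRel U)

variable [DecidablePred (· ∈ U)]

lemma card_inter_subgroup_mul_singleton (P : Finset G) (g : G) :
    Nat.card ((P : Set G) ∩ ((U : Set G) * {g}) : Set G) =
      #{x ∈ P | (⟦x⟧ : Quotient (QuotientGroup.rightRel U)) = ⟦g⟧} := by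
  rw [← Nat.card_eq_finsetCard, ← coe_sort_coe, coe_filter]
  congr! 2
  ext x
  simp [rightRel_mk_eq_mk_iff]

variable [Fintype G]

lemma sum_card_rightRel_fiber (P : Finset G) :
    ∑ q : Quotient (QuotientGroup.rightRel U), #{x ∈ P | ⟦x⟧ = q} = #P :=
  (card_eq_sum_card_fiberwise fun _ _ => mem_coe.2 (mem_univ _)).symm

lemma sum_sq_card_rightRel_fiber (P : Finset G) :
    ∑ q : Quotient (QuotientGroup.rightRel U), #{x ∈ P | ⟦x⟧ = q} ^ 2 =
      #{p ∈ P ×ˢ P | p.1 * p.2⁻¹ ∈ U} := by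
  rw [card_eq_sum_card_fiberwise
    (f := fun p => (⟦p.1⟧ : Quotient (QuotientGroup.rightRel U))) (t := univ)
    (fun _ _ => mem_coe.2 (mem_univ _))]
  refine sum_congr rfl fun q _ => ?_
  rw [sq, ← card_product]
  congr 1
  ext ⟨x, y⟩
  simp only [mem_filter, mem_product]
  constructor
  · rintro ⟨⟨hx, hxq⟩, hy, hyq⟩
    exact ⟨⟨⟨hx, hy⟩, (rightRel_mk_eq_mk_iff U).1 (hxq.trans hyq.symm)⟩, hxq⟩
  · rintro ⟨⟨⟨hx, hy⟩, hxy⟩, hxq⟩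
    exact ⟨⟨hx, hxq⟩, hy, ((rightRel_mk_eq_mk_iff U).2 hxy).symm.trans hxq⟩

end RightCosets

section DiffCount

variable [Group G] [Fintype G] [DecidableEq G]

lemma diffCount_coe_finset {P : Finset G} {g : G} (hg : g ≠ 1) :
    diffCount (P : Set G) g = #{p ∈ P ×ˢ P | p.1 * p.2⁻¹ = g} := by
  rw [diffCount, Nat.card_eq_fintype_card, Fintype.card_subtype]
  congr 1
  ext ⟨x, y⟩
  simp only [mem_filter, mem_univ, true_and, mem_product, mem_coe]
  constructor
  · rintro ⟨hx, hy, -, hxy⟩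
    exact ⟨⟨hx, hy⟩, hxy⟩
  · rintro ⟨⟨hx, hy⟩, hxy⟩
    refine ⟨hx, hy, ?_, hxy⟩
    rintro rfl
    exact hg (by simpa using hxy.symm)

variable (U : Subgroup G) [DecidablePred (· ∈ U)] (P : Finset G)

lemma card_filter_mul_inv_mem :
    #{p ∈ P ×ˢ P | p.1 * p.2⁻¹ ∈ U} =
      #P + ∑ u ∈ (U : Set G).toFinset.erase 1, diffCount (P : Set G) u := by
  rw [card_eq_sum_card_fiberwise (f := fun p : G × G => p.1 * p.2⁻¹) (t := (U : Set G).toFinset)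
    (fun p hp => by simpa using (mem_filter.1 hp).2),
    ← add_sum_erase _ _ (Set.mem_toFinset.2 U.one_mem)]
  congr 1
  · rw [← P.diag_card]
    congr 1
    ext ⟨x, y⟩
    simp only [mem_filter, mem_product, mul_inv_eq_one, mem_diag]
    constructor
    · rintro ⟨⟨⟨hx, -⟩, -⟩, rfl⟩
      exact ⟨hx, rfl⟩
    · rintro ⟨hx, rfl⟩
      simp [hx]
  · refine sum_congr rfl fun u hu => ?_
    obtain ⟨hu1, huU⟩ := mem_erase.1 hu
    rw [diffCount_coe_finset hu1, filter_filter]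
    congr 1
    ext p
    simp only [mem_filter, Set.mem_toFinset] at huU ⊢
    exact and_congr_right fun _ => ⟨And.right, fun h => ⟨h ▸ huU, h⟩⟩

lemma sum_sq_card_rightRel_fiber_of_diffCount_eq {μ : ℤ}
    (hμ : ∀ u ∈ U, u ≠ 1 → (diffCount (P : Set G) u : ℤ) = μ) :
    ∑ q : Quotient (QuotientGroup.rightRel U), (#{x ∈ P | ⟦x⟧ = q} : ℤ) ^ 2 =
      #P + (Nat.card U - 1) * μ := by
  have hcount := congrArg (Nat.cast : ℕ → ℤ)
    ((sum_sq_card_rightRel_fiber U P).trans (card_filter_mul_inv_mem U P))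
  push_cast at hcount
  rw [hcount,
    sum_congr rfl fun u hu => hμ u (by simpa using (mem_erase.1 hu).2) (mem_erase.1 hu).1,
    sum_const, card_erase_of_mem (Set.mem_toFinset.2 U.one_mem), Set.toFinset_card,
    ← Nat.card_eq_fintype_card, nsmul_eq_mul, Nat.cast_sub Nat.card_pos]
  simp

end DiffCount

lemma Finset.eq_of_sum_eq_of_sum_sq_eq {ι R : Type*} [CommRing R] [LinearOrder R]
    [IsStrictOrderedRing R] {s : Finset ι} {f : ι → R} {c : R}
    (hsum : ∑ i ∈ s, f i = #s * c) (hsq : ∑ i ∈ s, f i ^ 2 = #s * c ^ 2) :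
    ∀ i ∈ s, f i = c := by
  have hvar : ∑ i ∈ s, (f i - c) ^ 2 = 0 := by
    simp only [sub_sq, sum_add_distrib, sum_sub_distrib, ← sum_mul, ← mul_sum, hsum, hsq,
      sum_const, nsmul_eq_mul]
    ring
  intro i hi
  exact sub_eq_zero.1 (pow_eq_zero_iff two_ne_zero |>.1
    ((sum_eq_zero_iff_of_nonneg fun _ _ => sq_nonneg _).1 hvar i hi))

lemma card_rightRel_fiber_eq_of_diffCount_eq [Group G] [Fintype G] [DecidableEq G]
    (U : Subgroup G) [DecidablePred (· ∈ U)] (P : Finset G) {r : ℕ}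
    (hindex : U.index = Nat.card U) (hPU : Disjoint (P : Set G) U)
    (hPcard : #P = r * (U.index - 1))
    (hdiff : ∀ u ∈ U, u ≠ 1 → (diffCount (P : Set G) u : ℤ) = r ^ 2 - r) :
    ∀ q : Quotient (QuotientGroup.rightRel U), q ≠ ⟦1⟧ →
      #{x ∈ P | ⟦x⟧ = q} = r := by
  have hm : 1 ≤ U.index := Nat.one_le_iff_ne_zero.2 U.index_ne_zero_of_finite
  let a (q : Quotient (QuotientGroup.rightRel U)) : ℤ := #{x ∈ P | ⟦x⟧ = q}
  let S := univ.erase (⟦1⟧ : Quotient (QuotientGroup.rightRel U))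
  have ha1 : a (⟦1⟧) = 0 := by
    simp [a, ← card_inter_subgroup_mul_singleton, Set.disjoint_iff_inter_eq_empty.1 hPU]
  have hS : (#S : ℤ) = U.index - 1 := by
    rw [card_erase_of_mem (mem_univ _), card_univ, ← Nat.card_eq_fintype_card,
      card_quotient_rightRel_eq_index, Nat.cast_sub hm, Nat.cast_one]
  have hsum : ∑ q ∈ S, a q = #S * r := by
    rw [sum_erase _ ha1, ← Nat.cast_sum, sum_card_rightRel_fiber, hPcard, hS]
    push_cast [Nat.cast_sub hm]
    ring
  have hsq : ∑ q ∈ S, a q ^ 2 = #S * r ^ 2 := by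
    rw [sum_erase _ (by rw [ha1]; ring),
      sum_sq_card_rightRel_fiber_of_diffCount_eq U P hdiff, hPcard, ← hindex, hS]
    push_cast [Nat.cast_sub hm]
    ring
  intro q hq
  exact Nat.cast_inj.1
    (Finset.eq_of_sum_eq_of_sum_sq_eq hsum hsq q (mem_erase.2 ⟨hq, mem_univ _⟩))

theorem stmt_8 {G : Type*} [Group G] [Finite G] (n r : ℕ)
    (U : Subgroup G) (hG : Nat.card G = n ^ 2) (hU : Nat.card U = n)
    (P : Set G) (hP : IsLatinPDS P n r) (hPU : P ∩ (U : Set G) = ∅) :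
    ∀ g : G, (U : Set G) * ({g} : Set G) ≠ (U : Set G) →
      Nat.card (P ∩ ((U : Set G) * ({g} : Set G)) : Set G) = r := by
  classical
  cases nonempty_fintype G
  obtain ⟨⟨-, hPcard, hdiff⟩, -, -⟩ := hP
  obtain ⟨P, rfl⟩ := P.toFinite.exists_finset_coe
  rw [coe_sort_coe, Nat.card_eq_finsetCard] at hPcard
  have hindex : U.index = n :=
    Nat.eq_of_mul_eq_mul_left (hU ▸ Nat.card_pos) (by rw [← hU, U.card_mul_index, hG, hU, sq])
  intro g hg
  have hg1 : (⟦g⟧ : Quotient (QuotientGroup.rightRel U)) ≠ ⟦1⟧ := fun hg1 =>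
    hg (subgroup_mul_singleton_eq_self U (by simpa using (rightRel_mk_eq_mk_iff U).1 hg1))
  rw [card_inter_subgroup_mul_singleton]
  refine card_rightRel_fiber_eq_of_diffCount_eq U P (hindex.trans hU.symm)
    (Set.disjoint_iff_inter_eq_empty.2 hPU) (hindex ▸ hPcard)
    (fun u hu hu1 => (hdiff u hu1).2 fun huP => hPU.subset ⟨huP, hu⟩) _ hg1
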